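/- arXiv:1909.10799 — 3 statements merged into one kernel-verified Lean document; each statement's English description precedes it below -/
import Mathlib

section
/- In a monoidal r-category C (a monoidal category where Hom(1, X⊗Y) is representable as Hom(X*, Y) and X ↦ X* is an equivalence), given an object X with the canonical coevaluation map coev_X : 1 → X ⊗ X* and any morphism ev_X : X* ⊗ X → 1, the two zig-zag rigidity equations (id_X ⊗ ev_X) ∘ (coev_X ⊗ id_X) = id_X and (ev_X ⊗ id_{X*}) ∘ (id_{X*} ⊗ coev_X) = id_{X*} are equivalent to each other. -/
open CategoryTheory MonoidalCategory

/-- The structure of a monoidal r-category on a monoidal category `C`: for each object `X`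
the functor `Y ↦ Hom(𝟙_C, X ⊗ Y)` is representable by an object `dual X`, and the duality
`X ↦ dual X` is an equivalence with inverse `codual`, giving functorial identifications
`Hom(𝟙_C, X ⊗ Y) ≃ Hom(dual X, Y) ≃ Hom(codual Y, X)`. -/
structure RStruct (C : Type*) [Category C] [MonoidalCategory C] where
  dual : C → C
  codual : C → C
  homEquiv : ∀ X Y : C, (𝟙_ C ⟶ X ⊗ Y) ≃ (dual X ⟶ Y)
  homEquiv_natural : ∀ {X Y Z : C} (g : 𝟙_ C ⟶ X ⊗ Y) (f : Y ⟶ Z),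
    homEquiv X Z (g ≫ X ◁ f) = homEquiv X Y g ≫ f
  homEquiv' : ∀ X Y : C, (𝟙_ C ⟶ X ⊗ Y) ≃ (codual Y ⟶ X)
  homEquiv'_natural : ∀ {X Z : C} (Y : C) (g : 𝟙_ C ⟶ X ⊗ Y) (f : X ⟶ Z),
    homEquiv' Z Y (g ≫ f ▷ Y) = homEquiv' X Y g ≫ f
  codual_dual : ∀ X : C, codual (dual X) = X
  dual_codual : ∀ X : C, dual (codual X) = X

/-- The canonical coevaluation morphism `coev_X : 𝟙_C ⟶ X ⊗ X*` of an object in a monoidal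
r-category, corresponding to the identity of `dual X` under the representing isomorphism. -/
def RStruct.coev {C : Type*} [Category C] [MonoidalCategory C]
    (r : RStruct C) (X : C) : 𝟙_ C ⟶ X ⊗ r.dual X :=
  (r.homEquiv X (r.dual X)).symm (𝟙 (r.dual X))

/-- Interchange: the two "zig-zag composites followed by/preceded by coevaluation"
agree, for any `c` and `ev`. -/
lemma zigzag_interchange {C : Type*} [Category C] [MonoidalCategory C] (A B : C)
    (c : 𝟙_ C ⟶ A ⊗ B) (ev : B ⊗ A ⟶ 𝟙_ C) :
    c ≫ ((λ_ A).inv ≫ c ▷ A ≫ (α_ A B A).hom ≫ A ◁ ev ≫ (ρ_ A).hom) ▷ B =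
      c ≫ A ◁ ((ρ_ B).inv ≫ B ◁ c ≫ (α_ B A B).inv ≫ ev ▷ B ≫ (λ_ B).hom) := by
  have mid : (α_ (A ⊗ B) A B).inv ≫ (α_ A B A).hom ▷ B ≫ (α_ A (B ⊗ A) B).hom ≫
      A ◁ ev ▷ B ≫ A ◁ (λ_ B).hom =
      (α_ A B (A ⊗ B)).hom ≫ A ◁ (α_ B A B).inv ≫ A ◁ ev ▷ B ≫ A ◁ (λ_ B).hom := by
    monoidal
  calc c ≫ ((λ_ A).inv ≫ c ▷ A ≫ (α_ A B A).hom ≫ A ◁ ev ≫ (ρ_ A).hom) ▷ B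
      = c ≫ (λ_ (A ⊗ B)).inv ≫ (α_ (𝟙_ C) A B).inv ≫ c ▷ A ▷ B ≫ (α_ A B A).hom ▷ B ≫
        (α_ A (B ⊗ A) B).hom ≫ A ◁ ev ▷ B ≫ A ◁ (λ_ B).hom := by
          simp [whisker_exchange_assoc, whisker_exchange]
    _ = c ≫ (λ_ (A ⊗ B)).inv ≫ c ▷ (A ⊗ B) ≫ (α_ (A ⊗ B) A B).inv ≫ (α_ A B A).hom ▷ B ≫
        (α_ A (B ⊗ A) B).hom ≫ A ◁ ev ▷ B ≫ A ◁ (λ_ B).hom := by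
          rw [← associator_inv_naturality_left_assoc]
    _ = (λ_ (𝟙_ C)).inv ≫ 𝟙_ C ◁ c ≫ c ▷ (A ⊗ B) ≫ (α_ (A ⊗ B) A B).inv ≫
        (α_ A B A).hom ▷ B ≫ (α_ A (B ⊗ A) B).hom ≫ A ◁ ev ▷ B ≫ A ◁ (λ_ B).hom := by
          rw [leftUnitor_inv_naturality_assoc]
    _ = (ρ_ (𝟙_ C)).inv ≫ c ▷ 𝟙_ C ≫ (A ⊗ B) ◁ c ≫ (α_ A B (A ⊗ B)).hom ≫
        A ◁ (α_ B A B).inv ≫ A ◁ ev ▷ B ≫ A ◁ (λ_ B).hom := by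
          rw [← whisker_exchange_assoc, unitors_inv_equal, mid]
    _ = c ≫ (ρ_ (A ⊗ B)).inv ≫ (A ⊗ B) ◁ c ≫ (α_ A B (A ⊗ B)).hom ≫
        A ◁ (α_ B A B).inv ≫ A ◁ ev ▷ B ≫ A ◁ (λ_ B).hom := by
          rw [rightUnitor_inv_naturality_assoc]
    _ = c ≫ (ρ_ (A ⊗ B)).inv ≫ (α_ A B (𝟙_ C)).hom ≫ A ◁ B ◁ c ≫
        A ◁ (α_ B A B).inv ≫ A ◁ ev ▷ B ≫ A ◁ (λ_ B).hom := by
          rw [associator_naturality_right_assoc]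
    _ = c ≫ A ◁ ((ρ_ B).inv ≫ B ◁ c ≫ (α_ B A B).inv ≫ ev ▷ B ≫ (λ_ B).hom) := by
          simp [whisker_exchange_assoc, whisker_exchange]

lemma RStruct.homEquiv_coev {C : Type*} [Category C] [MonoidalCategory C]
    (r : RStruct C) (X : C) : r.homEquiv X (r.dual X) (r.coev X) = 𝟙 (r.dual X) :=
  (r.homEquiv X (r.dual X)).apply_symm_apply _

/-- Right cancellation of the canonical coevaluation: if `coev X ≫ Φ ▷ X* = coev X`
then `Φ = 𝟙 X`.  This uses the corepresentability `homEquiv'`. -/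
lemma RStruct.coev_cancel {C : Type*} [Category C] [MonoidalCategory C]
    (r : RStruct C) (X : C) (Φ : X ⟶ X)
    (hΦ : r.coev X ≫ Φ ▷ r.dual X = r.coev X) : Φ = 𝟙 X := by
  have h : r.codual (r.dual X) = X := r.codual_dual X
  -- the corepresenting coevaluation at `codual (dual X)`, transported to `X`
  obtain ⟨c₀, hc₀⟩ : ∃ c₀ : 𝟙_ C ⟶ X ⊗ r.dual X,
      r.homEquiv' X (r.dual X) c₀ = eqToHom h := by
    refine ⟨(r.homEquiv' (r.codual (r.dual X)) (r.dual X)).symm (𝟙 (r.codual (r.dual X))) ≫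
      eqToHom h ▷ r.dual X, ?_⟩
    rw [r.homEquiv'_natural, Equiv.apply_symm_apply, Category.id_comp]
  have hm : c₀ ≫ (eqToHom h.symm ≫ r.homEquiv' X (r.dual X) (r.coev X)) ▷ r.dual X =
      r.coev X := by
    apply (r.homEquiv' X (r.dual X)).injective
    rw [r.homEquiv'_natural, hc₀, eqToHom_trans_assoc, eqToHom_refl, Category.id_comp]
  have hk : r.coev X ≫ X ◁ r.homEquiv X (r.dual X) c₀ = c₀ := by
    apply (r.homEquiv X (r.dual X)).injective
    rw [r.homEquiv_natural, r.homEquiv_coev, Category.id_comp]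
  -- `m` below is a split epimorphism
  obtain ⟨m, hm⟩ : ∃ m : X ⟶ X, c₀ ≫ m ▷ r.dual X = r.coev X := ⟨_, hm⟩
  obtain ⟨k, hk⟩ : ∃ k : r.dual X ⟶ r.dual X, r.coev X ≫ X ◁ k = c₀ := ⟨_, hk⟩
  have hsplit : (eqToHom h.symm ≫ r.homEquiv' X (r.dual X) (c₀ ≫ X ◁ k)) ≫ m = 𝟙 X := by
    have h1 : (c₀ ≫ X ◁ k) ≫ m ▷ r.dual X = c₀ := by
      rw [Category.assoc, whisker_exchange, ← Category.assoc, hm, hk]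
    have h2 := congrArg (r.homEquiv' X (r.dual X)) h1
    rw [r.homEquiv'_natural, hc₀] at h2
    rw [Category.assoc, h2, eqToHom_trans, eqToHom_refl]
  have hmΦ : m ≫ Φ = m := by
    have h3 : c₀ ≫ (m ≫ Φ) ▷ r.dual X = c₀ ≫ m ▷ r.dual X := by
      rw [comp_whiskerRight, ← Category.assoc, hm, hΦ]
    have h4 := congrArg (r.homEquiv' X (r.dual X)) h3
    rw [r.homEquiv'_natural, r.homEquiv'_natural, hc₀] at h4
    exact (cancel_epi (eqToHom h)).mp h4
  calc Φ = ((eqToHom h.symm ≫ r.homEquiv' X (r.dual X) (c₀ ≫ X ◁ k)) ≫ m) ≫ Φ := by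
        rw [hsplit, Category.id_comp]
    _ = (eqToHom h.symm ≫ r.homEquiv' X (r.dual X) (c₀ ≫ X ◁ k)) ≫ m ≫ Φ :=
        Category.assoc _ _ _
    _ = 𝟙 X := by rw [hmΦ, hsplit]

/-- In a monoidal r-category, for any object `X` with its canonical coevaluation
`coev_X : 𝟙 ⟶ X ⊗ X*` and any morphism `ev : X* ⊗ X ⟶ 𝟙`, the two zig-zag rigidity
equations are equivalent to each other. -/
theorem rigidity_zigzags_equivalent {C : Type*} [Category C] [MonoidalCategory C]
    (r : RStruct C) (X : C) (ev : r.dual X ⊗ X ⟶ 𝟙_ C) :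
    ((λ_ X).inv ≫ r.coev X ▷ X ≫ (α_ X (r.dual X) X).hom ≫ X ◁ ev ≫ (ρ_ X).hom = 𝟙 X) ↔
      ((ρ_ (r.dual X)).inv ≫ r.dual X ◁ r.coev X ≫ (α_ (r.dual X) X (r.dual X)).inv ≫
        ev ▷ r.dual X ≫ (λ_ (r.dual X)).hom = 𝟙 (r.dual X)) := by
  have key := zigzag_interchange X (r.dual X) (r.coev X) ev
  constructor
  · intro h1
    rw [h1, id_whiskerRight, Category.comp_id] at key
    have h5 := congrArg (r.homEquiv X (r.dual X)) key
    rw [r.homEquiv_natural, r.homEquiv_coev] at h5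
    simpa using h5.symm
  · intro h2
    rw [h2, MonoidalCategory.whiskerLeft_id, Category.comp_id] at key
    exact r.coev_cancel X _ key
end

section
/- Let C be a weakly fusion category and M a simple object of C such that M ⊗ *M has a rigid left dual. Then M has a rigid left dual. -/
open CategoryTheory MonoidalCategory CategoryTheory.Limits

section Aux

variable {D : Type*} [Category D] [MonoidalCategory D]

/-- The key zig-zag computation: given an exact-pairing-style zigzag for `M ⊗ N` with dual `Y`,
and a split unit `γ : 𝟙 ⟶ N ⊗ M` with retraction `e`, the candidate coevaluation
`u ≫ α` and the candidate evaluation built from `γ, v, e` satisfy the triangle identity on `M`. -/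
private lemma zigzagA {M N Y : D}
    (u : 𝟙_ D ⟶ (M ⊗ N) ⊗ Y) (v : Y ⊗ (M ⊗ N) ⟶ 𝟙_ D)
    (hz : u ▷ (M ⊗ N) ≫ (α_ (M ⊗ N) Y (M ⊗ N)).hom ≫ (M ⊗ N) ◁ v =
      (λ_ (M ⊗ N)).hom ≫ (ρ_ (M ⊗ N)).inv)
    (γ : 𝟙_ D ⟶ N ⊗ M) (e : N ⊗ M ⟶ 𝟙_ D) (he : γ ≫ e = 𝟙 (𝟙_ D)) :
    (u ≫ (α_ M N Y).hom) ▷ M ≫ (α_ M (N ⊗ Y) M).hom ≫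
      M ◁ ((α_ N Y M).hom ≫ N ◁ (Y ◁ ((ρ_ M).inv ≫ M ◁ γ ≫ (α_ M N M).inv) ≫
        (α_ Y (M ⊗ N) M).inv ≫ v ▷ M ≫ (λ_ M).hom) ≫ e) =
    (λ_ M).hom ≫ (ρ_ M).inv := by
  calc
    _ = 𝟙 (𝟙_ D ⊗ M) ⊗≫ (u ▷ (M ⊗ 𝟙_ D) ≫ ((M ⊗ N) ⊗ Y) ◁ (M ◁ γ)) ⊗≫
        (M ⊗ N) ◁ (v ▷ M) ⊗≫ M ◁ e ⊗≫ 𝟙 (M ⊗ 𝟙_ D) := by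
      monoidal
    _ = 𝟙 (𝟙_ D ⊗ M) ⊗≫ (𝟙_ D ◁ (M ◁ γ) ≫ u ▷ (M ⊗ (N ⊗ M))) ⊗≫
        (M ⊗ N) ◁ (v ▷ M) ⊗≫ M ◁ e ⊗≫ 𝟙 (M ⊗ 𝟙_ D) := by
      rw [← whisker_exchange]
    _ = 𝟙 (𝟙_ D ⊗ M) ⊗≫ 𝟙_ D ◁ (M ◁ γ) ⊗≫
        ((u ▷ (M ⊗ N) ≫ (α_ (M ⊗ N) Y (M ⊗ N)).hom ≫ (M ⊗ N) ◁ v) ▷ M) ⊗≫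
        M ◁ e ⊗≫ 𝟙 (M ⊗ 𝟙_ D) := by
      monoidal
    _ = 𝟙 (𝟙_ D ⊗ M) ⊗≫ 𝟙_ D ◁ (M ◁ γ) ⊗≫ (((λ_ (M ⊗ N)).hom ≫ (ρ_ (M ⊗ N)).inv) ▷ M) ⊗≫
        M ◁ e ⊗≫ 𝟙 (M ⊗ 𝟙_ D) := by
      rw [hz]
    _ = 𝟙 (𝟙_ D ⊗ M) ⊗≫ M ◁ (γ ≫ e) ⊗≫ 𝟙 (M ⊗ 𝟙_ D) := by
      monoidal
    _ = (λ_ M).hom ≫ (ρ_ M).inv := by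
      rw [he]
      monoidal

/-- Given half-dual data `(c, e)` for `M` with candidate dual `W` satisfying the triangle
identity on `M`, the coevaluation absorbs the canonical idempotent on `W`. -/
private lemma claimC {M W : D} (c : 𝟙_ D ⟶ M ⊗ W) (e : W ⊗ M ⟶ 𝟙_ D)
    (hA : c ▷ M ≫ (α_ M W M).hom ≫ M ◁ e = (λ_ M).hom ≫ (ρ_ M).inv) :
    c ≫ M ◁ ((ρ_ W).inv ≫ W ◁ c ≫ (α_ W M W).inv ≫ e ▷ W ≫ (λ_ W).hom) = c := by
  calc
    _ = 𝟙 (𝟙_ D) ⊗≫ (c ▷ 𝟙_ D ≫ (M ⊗ W) ◁ c) ⊗≫ M ◁ (e ▷ W) ⊗≫ 𝟙 (M ⊗ W) := by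
      monoidal
    _ = 𝟙 (𝟙_ D) ⊗≫ (𝟙_ D ◁ c ≫ c ▷ (M ⊗ W)) ⊗≫ M ◁ (e ▷ W) ⊗≫ 𝟙 (M ⊗ W) := by
      rw [whisker_exchange]
    _ = 𝟙 (𝟙_ D) ⊗≫ 𝟙_ D ◁ c ⊗≫ ((c ▷ M ≫ (α_ M W M).hom ≫ M ◁ e) ▷ W) ⊗≫ 𝟙 (M ⊗ W) := by
      monoidal
    _ = 𝟙 (𝟙_ D) ⊗≫ 𝟙_ D ◁ c ⊗≫ (((λ_ M).hom ≫ (ρ_ M).inv) ▷ W) ⊗≫ 𝟙 (M ⊗ W) := by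
      rw [hA]
    _ = c := by
      monoidal

/-- The canonical endomorphism of the candidate dual is idempotent. -/
private lemma tIdem {M W : D} (c : 𝟙_ D ⟶ M ⊗ W) (e : W ⊗ M ⟶ 𝟙_ D)
    (hA : c ▷ M ≫ (α_ M W M).hom ≫ M ◁ e = (λ_ M).hom ≫ (ρ_ M).inv) :
    ((ρ_ W).inv ≫ W ◁ c ≫ (α_ W M W).inv ≫ e ▷ W ≫ (λ_ W).hom) ≫
      ((ρ_ W).inv ≫ W ◁ c ≫ (α_ W M W).inv ≫ e ▷ W ≫ (λ_ W).hom) =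
    (ρ_ W).inv ≫ W ◁ c ≫ (α_ W M W).inv ≫ e ▷ W ≫ (λ_ W).hom := by
  have hC := claimC c e hA
  calc
    _ = (ρ_ W).inv ≫ W ◁ c ≫ (α_ W M W).inv ≫ e ▷ W ≫ 𝟙_ D ◁
          ((ρ_ W).inv ≫ W ◁ c ≫ (α_ W M W).inv ≫ e ▷ W ≫ (λ_ W).hom) ≫ (λ_ W).hom := by
      simp only [Category.assoc, leftUnitor_naturality]
    _ = (ρ_ W).inv ≫ W ◁ c ≫ (α_ W M W).inv ≫ (W ⊗ M) ◁
          ((ρ_ W).inv ≫ W ◁ c ≫ (α_ W M W).inv ≫ e ▷ W ≫ (λ_ W).hom) ≫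
          e ▷ W ≫ (λ_ W).hom := by
      rw [whisker_exchange_assoc]
    _ = (ρ_ W).inv ≫ W ◁ (c ≫ M ◁
          ((ρ_ W).inv ≫ W ◁ c ≫ (α_ W M W).inv ≫ e ▷ W ≫ (λ_ W).hom)) ≫
          (α_ W M W).inv ≫ e ▷ W ≫ (λ_ W).hom := by
      rw [← associator_inv_naturality_right_assoc, ← MonoidalCategory.whiskerLeft_comp_assoc]
    _ = _ := by rw [hC]

/-- Splitting the canonical idempotent of a half-dual yields an honest exact pairing. -/
private def pairingOfHalf {M W N' : D} (c : 𝟙_ D ⟶ M ⊗ W) (e : W ⊗ M ⟶ 𝟙_ D)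
    (hA : c ▷ M ≫ (α_ M W M).hom ≫ M ◁ e = (λ_ M).hom ≫ (ρ_ M).inv)
    (π : W ⟶ N') (ι : N' ⟶ W) (hιπ : ι ≫ π = 𝟙 N')
    (hπι : π ≫ ι = (ρ_ W).inv ≫ W ◁ c ≫ (α_ W M W).inv ≫ e ▷ W ≫ (λ_ W).hom) :
    ExactPairing M N' where
  coevaluation' := c ≫ M ◁ π
  evaluation' := ι ▷ M ≫ e
  coevaluation_evaluation' := by
    simp only [MonoidalCategory.whiskerLeft_comp, comp_whiskerRight, Category.assoc]
    rw [associator_inv_naturality_right_assoc, whisker_exchange_assoc (ι ▷ M) π,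
      whisker_exchange (f := e) (g := π), ← associator_inv_naturality_left_assoc,
      whisker_exchange_assoc ι c]
    rw [MonoidalCategory.whiskerRight_id, MonoidalCategory.id_whiskerLeft]
    simp only [Category.assoc]
    rw [← reassoc_of% hπι]
    simp [reassoc_of% hιπ, hιπ]
  evaluation_coevaluation' := by
    simp only [MonoidalCategory.whiskerLeft_comp, comp_whiskerRight, Category.assoc]
    rw [associator_naturality_middle_assoc, ← MonoidalCategory.whiskerLeft_comp_assoc,
      ← comp_whiskerRight, hπι, ← associator_naturality_middle_assoc,
      ← comp_whiskerRight_assoc, claimC c e hA]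
    exact hA

end Aux

/-- Let `C` be a weakly fusion category (a finite semisimple `k`-linear abelian monoidal
r-category with simple unit, over an algebraically closed field) and `M` a simple object of
`C` such that `M ⊗ *M` has a rigid left dual.  Then `M` has a rigid left dual.
(An object `X` has rigid left dual `Y` iff there are coevaluation `𝟙 ⟶ X ⊗ Y` and evaluation
`Y ⊗ X ⟶ 𝟙` satisfying the zig-zag identities, i.e. `ExactPairing X Y`.) -/
theorem rigid_left_dual_of_tensor_codual {k : Type*} [Field k] [IsAlgClosed k]
    {C : Type*} [Category C] [Abelian C] [Linear k C] [MonoidalCategory C]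
    [MonoidalPreadditive C] [MonoidalLinear k C]
    (r : RStruct C)
    (hunit : Simple (𝟙_ C))
    (hfd : ∀ X Y : C, FiniteDimensional k (X ⟶ Y))
    (hss : ∀ ⦃Z W : C⦄ (f : Z ⟶ W), Mono f → IsSplitMono f)
    (M : C) (hM : Simple M)
    (h : ∃ Y : C, Nonempty (ExactPairing (M ⊗ r.codual M) Y)) :
    ∃ Y : C, Nonempty (ExactPairing M Y) := by
  haveI := hunit
  obtain ⟨Y, ⟨p⟩⟩ := h
  set N := r.codual M with hN
  have hdc : r.dual N = M := r.dual_codual M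
  -- the canonical "unit" 𝟙 ⟶ N ⊗ M coming from the r-structure
  set γ : 𝟙_ C ⟶ N ⊗ M := (r.homEquiv N M).symm (eqToHom hdc) with hγdef
  have hγval : r.homEquiv N M γ = eqToHom hdc := Equiv.apply_symm_apply _ _
  -- γ is nonzero
  have hγ0 : γ ≠ 0 := by
    intro h0
    have e2 := r.homEquiv_natural γ (0 : M ⟶ M)
    rw [MonoidalPreadditive.whiskerLeft_zero, Limits.comp_zero, Limits.comp_zero] at e2
    have key : eqToHom hdc = (0 : r.dual N ⟶ M) := by
      calc eqToHom hdc = r.homEquiv N M γ := hγval.symm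
        _ = r.homEquiv N M 0 := by rw [h0]
        _ = 0 := e2
    have hid : 𝟙 M = (0 : M ⟶ M) := by
      calc 𝟙 M = eqToHom hdc.symm ≫ eqToHom hdc := by simp
        _ = eqToHom hdc.symm ≫ 0 := by rw [key]
        _ = 0 := Limits.comp_zero
    exact CategoryTheory.id_nonzero M hid
  -- γ is (split) mono, with retraction e
  have hmono : Mono γ := mono_of_nonzero_from_simple hγ0
  haveI := hss γ hmono
  set e : N ⊗ M ⟶ 𝟙_ C := retraction γ with hedef
  have he : γ ≫ e = 𝟙 (𝟙_ C) := IsSplitMono.id γ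
  -- the half-dual data
  set c : 𝟙_ C ⟶ M ⊗ (N ⊗ Y) := p.coevaluation' ≫ (α_ M N Y).hom with hcdef
  set ee : (N ⊗ Y) ⊗ M ⟶ 𝟙_ C :=
    (α_ N Y M).hom ≫ N ◁ (Y ◁ ((ρ_ M).inv ≫ M ◁ γ ≫ (α_ M N M).inv) ≫
      (α_ Y (M ⊗ N) M).inv ≫ p.evaluation' ▷ M ≫ (λ_ M).hom) ≫ e with heedef
  have hA : c ▷ M ≫ (α_ M (N ⊗ Y) M).hom ≫ M ◁ ee = (λ_ M).hom ≫ (ρ_ M).inv :=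
    zigzagA p.coevaluation' p.evaluation' p.evaluation_coevaluation' γ e he
  -- the canonical idempotent on the candidate dual N ⊗ Y
  set t : N ⊗ Y ⟶ N ⊗ Y :=
    (ρ_ (N ⊗ Y)).inv ≫ (N ⊗ Y) ◁ c ≫ (α_ (N ⊗ Y) M (N ⊗ Y)).inv ≫ ee ▷ (N ⊗ Y) ≫
      (λ_ (N ⊗ Y)).hom with htdef
  have ht : t ≫ t = t := tIdem c ee hA
  -- split the idempotent
  set idm : N ⊗ Y ⟶ N ⊗ Y := 𝟙 (N ⊗ Y) - t with hidm
  have hcond : t ≫ idm = 0 := by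
    rw [hidm, Preadditive.comp_sub, Category.comp_id, ht, sub_self]
  refine ⟨kernel idm, ⟨?_⟩⟩
  have hπι : kernel.lift idm t hcond ≫ kernel.ι idm = t :=
    kernel.lift_ι _ _ _
  have hι : kernel.ι idm ≫ t = kernel.ι idm := by
    have hk := kernel.condition idm
    rw [hidm, Preadditive.comp_sub, Category.comp_id, sub_eq_zero] at hk
    exact hk.symm
  have hιπ : kernel.ι idm ≫ kernel.lift idm t hcond = 𝟙 (kernel idm) := by
    rw [← cancel_mono (kernel.ι idm)]
    rw [Category.assoc, hπι, hι, Category.id_comp]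
  exact pairingOfHalf c ee hA (kernel.lift idm t hcond)
    (kernel.ι idm) hιπ (hπι.trans htdef)
end

section
/- Let σ be a diagram automorphism of a simply-laced simple Lie algebra g, acting on the weight lattice P(g) by permuting fundamental weights according to its action on the Dynkin diagram. Then there is a natural bijection ι : P(g)^σ → P(g_σ) between σ-invariant integral weights of g and integral weights of the orbit Lie algebra g_σ, satisfying: (1) for each orbit representative i, ι sends the orbit sum Σ_a ω_{σ^a(i)} to the fundamental weight ω_i of g_σ; and (2) ι(ρ̄) = ρ̄_σ, where ρ̄ and ρ̄_σ are the sums of fundamental weights of g and g_σ respectively. -/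
/-- The sublattice of `σ`-invariant integral weights inside the weight lattice `V → ℤ`
(freely spanned by the fundamental weights indexed by the Dynkin vertices `V`). -/
def fixedWeights {V : Type*} (σ : Equiv.Perm V) : Submodule ℤ (V → ℤ) where
  carrier := {f | ∀ v, f (σ v) = f v}
  add_mem' := by
    intro x y hx hy v
    simp [hx v, hy v]
  zero_mem' := fun v => rfl
  smul_mem' := by
    intro c x hx v
    simp [hx v]

/-- Let `σ` be a diagram automorphism of a simply-laced simple Lie algebra `g`, acting on
the weight lattice (free on the Dynkin vertices `V`) by permuting the fundamental weights,
and let `π : V → O` be the projection to the set of `σ`-orbits on `V` (the Dynkin vertices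
of the orbit Lie algebra `g_σ`).  Then there is a natural bijection (an isomorphism of
lattices) `ι : P(g)^σ ≃ P(g_σ)` satisfying:
(1) `ι` sends the orbit sum `∑_a ω_{σ^a(i)}` (the indicator of the orbit `o`) to the
fundamental weight `ω_o` of `g_σ`; and
(2) `ι(ρ̄) = ρ̄_σ`, i.e. the sum of all fundamental weights of `g` maps to the sum of all
fundamental weights of `g_σ`. -/
theorem orbit_lie_algebra_weight_bijection
    {V O : Type*} [Fintype V] [Fintype O] [DecidableEq V] [DecidableEq O]
    (σ : Equiv.Perm V) (π : V → O) (hπ : Function.Surjective π)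
    (hπσ : ∀ v, π (σ v) = π v)
    (horb : ∀ v w, π v = π w → ∃ k : ℕ, (σ ^ k) v = w) :
    ∃ ι : (fixedWeights σ) ≃ₗ[ℤ] (O → ℤ),
      (∀ o : O,
        ι ⟨fun v => if π v = o then 1 else 0, by intro v; simp [hπσ v]⟩ =
          fun o' => if o' = o then 1 else 0) ∧
      ι ⟨fun _ => 1, fun _ => rfl⟩ = fun _ => 1 := by
  choose s hs using hπ
  have pow_inv : ∀ f ∈ fixedWeights σ, ∀ (k : ℕ) (v : V), f ((σ ^ k) v) = f v := by
    intro f hf k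
    induction k with
    | zero => intro v; simp
    | succ n ih =>
        intro v
        rw [pow_succ', Equiv.Perm.mul_apply, hf, ih]
  have key : ∀ f ∈ fixedWeights σ, ∀ v, f (s (π v)) = f v := by
    intro f hf v
    obtain ⟨k, hk⟩ := horb v (s (π v)) (by rw [hs])
    rw [← hk, pow_inv f hf]
  refine ⟨{ toFun := fun f o => f.1 (s o)
            map_add' := fun x y => rfl
            map_smul' := fun c x => rfl
            invFun := fun g => ⟨fun v => g (π v), fun v => by simp [hπσ]⟩
            left_inv := by
              intro f
              apply Subtype.ext
              funext v
              exact key f.1 f.2 v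
            right_inv := by
              intro g
              funext o
              simp [hs] }, ?_, ?_⟩
  · intro o
    funext o'
    simp [hs]
  · rfl
end
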